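/- Fix a dimension n, a constant c > 0 and positive weights γ : Fin n → ℝ (γᵢ > 0 for all i). Define δ : ℝⁿ → ℝ by δ(ξ) = (π/c)·√(Σᵢ γᵢ ξᵢ²) and g : ℝⁿ → ℝ by g(ξ) = 1 + cos(δ(ξ)) if δ(ξ) ≤ π and g(ξ) = 0 otherwise. Let S be a finite set of viewpoints v ∈ ℝⁿ with associated information values I_v ∈ ℝ, define η(x) = Σ_{v∈S} g(v − x), β(x) = Σ_{v∈S} I_v · g(v − x), and the approximate mutual information Ĩ(x) = β(x)/η(x). Then Ĩ is differentiable at every point x of the open set {x ∈ ℝⁿ : η(x) > 0}. -/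

import Mathlib

/-! The kernel is `g = k ∘ δ` with `k t = if t ≤ π then 1 + cos t else 0`, which is differentiable
on all of `ℝ` because `1 + cos` and its derivative both vanish at `π`. Writing `δ ξ = (π / c) ‖D ξ‖`
with `D` the diagonal scaling by `√γᵢ`, the map `δ` is differentiable wherever `D ξ ≠ 0` and
Lipschitz everywhere. At the remaining points `δ = 0`, where `k' = 0`, so `k ∘ δ` still has
derivative `0` there. Hence `η` and `β` are differentiable, and so is `β / η` where `η > 0`. -/

open Real Asymptotics Filter Topology Set

noncomputable def cutoffCos (t : ℝ) : ℝ := if t ≤ π then 1 + cos t else 0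

lemma hasDerivAt_cutoffCos_of_lt {t : ℝ} (ht : t < π) : HasDerivAt cutoffCos (-sin t) t := by
  refine ((hasDerivAt_cos t).const_add 1).congr_of_eventuallyEq ?_
  filter_upwards [Iio_mem_nhds ht] with s hs
  exact if_pos (le_of_lt hs)

lemma hasDerivAt_cutoffCos_of_gt {t : ℝ} (ht : π < t) : HasDerivAt cutoffCos 0 t := by
  refine (hasDerivAt_const t (0 : ℝ)).congr_of_eventuallyEq ?_
  filter_upwards [Ioi_mem_nhds ht] with s hs
  exact if_neg (not_le.mpr hs)

lemma hasDerivAt_cutoffCos_pi : HasDerivAt cutoffCos 0 π := by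
  have hleft : HasDerivWithinAt cutoffCos 0 (Iic π) π := by
    have := ((hasDerivAt_cos π).const_add 1).hasDerivWithinAt (s := Iic π)
    rw [sin_pi, neg_zero] at this
    exact this.congr (fun s hs => if_pos hs) (if_pos le_rfl)
  have hright : HasDerivWithinAt cutoffCos 0 (Ici π) π := by
    refine (hasDerivWithinAt_const π (Ici π) (0 : ℝ)).congr (fun s hs => ?_) ?_
    · rcases eq_or_lt_of_le (mem_Ici.mp hs) with rfl | hlt
      · simp [cutoffCos]
      · exact if_neg (not_le.mpr hlt)
    · simp [cutoffCos]
  simpa only [Iic_union_Ici, hasDerivWithinAt_univ] using hleft.union hright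

lemma differentiable_cutoffCos : Differentiable ℝ cutoffCos := fun t => by
  rcases lt_trichotomy t π with ht | rfl | ht
  · exact (hasDerivAt_cutoffCos_of_lt ht).differentiableAt
  · exact hasDerivAt_cutoffCos_pi.differentiableAt
  · exact (hasDerivAt_cutoffCos_of_gt ht).differentiableAt

theorem HasDerivAt.hasFDerivAt_comp_of_isBigO {𝕜 E F : Type*} [NontriviallyNormedField 𝕜]
    [NormedAddCommGroup E] [NormedSpace 𝕜 E] [NormedAddCommGroup F] [NormedSpace 𝕜 F]
    {f : 𝕜 → F} {φ : E → 𝕜} {a : E} (hf : HasDerivAt f 0 (φ a))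
    (hφ : (fun x => φ x - φ a) =O[𝓝 a] fun x => x - a) :
    HasFDerivAt (f ∘ φ) (0 : E →L[𝕜] F) a := by
  have hφa : Tendsto φ (𝓝 a) (𝓝 (φ a)) :=
    tendsto_sub_nhds_zero_iff.mp (hφ.trans_tendsto (tendsto_sub_nhds_zero_iff.mpr tendsto_id))
  rw [hasDerivAt_iff_isLittleO] at hf
  rw [hasFDerivAt_iff_isLittleO]
  simp only [smul_zero, sub_zero] at hf
  simp only [zero_apply, sub_zero]
  exact (hf.comp_tendsto hφa).trans_isBigO hφ

lemma isBigO_norm_apply_sub {𝕜 E F : Type*} [NontriviallyNormedField 𝕜] [NormedAddCommGroup E]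
    [NormedSpace 𝕜 E] [NormedAddCommGroup F] [NormedSpace 𝕜 F] (L : E →L[𝕜] F) (a : E) :
    (fun x => ‖L x‖ - ‖L a‖) =O[𝓝 a] fun x => x - a := by
  refine IsBigO.of_bound ‖L‖ (Eventually.of_forall fun x => ?_)
  calc ‖‖L x‖ - ‖L a‖‖ ≤ ‖L x - L a‖ := abs_norm_sub_norm_le _ _
    _ = ‖L (x - a)‖ := by rw [map_sub]
    _ ≤ ‖L‖ * ‖x - a‖ := L.le_opNorm _

lemma differentiable_cutoffCos_comp_norm {E F : Type*} [NormedAddCommGroup E] [NormedSpace ℝ E]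
    [NormedAddCommGroup F] [InnerProductSpace ℝ F] (L : E →L[ℝ] F) (r : ℝ) :
    Differentiable ℝ fun x => cutoffCos (r * ‖L x‖) := fun a => by
  by_cases ha : L a = 0
  · have hf : HasDerivAt cutoffCos 0 (r * ‖L a‖) := by
      simpa [ha] using hasDerivAt_cutoffCos_of_lt pi_pos
    refine (hf.hasFDerivAt_comp_of_isBigO (φ := fun x => r * ‖L x‖) ?_).differentiableAt
    simpa only [← mul_sub] using (isBigO_norm_apply_sub L a).const_mul_left r
  · exact differentiable_cutoffCos.differentiableAt.comp a
      (((L.differentiableAt).norm ℝ ha).const_mul r)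

namespace EuclideanSpace

variable {ι : Type*}

noncomputable def diagScale (w : ι → ℝ) :
    EuclideanSpace ℝ ι →L[ℝ] EuclideanSpace ℝ ι :=
  (EuclideanSpace.equiv ι ℝ).symm.toContinuousLinearMap ∘L
    ContinuousLinearMap.pi fun i => w i • EuclideanSpace.proj i

@[simp] lemma diagScale_apply (w : ι → ℝ) (x : EuclideanSpace ℝ ι) (i : ι) :
    diagScale w x i = w i * x i := by
  simp [diagScale]

lemma norm_diagScale_sqrt [Fintype ι] {γ : ι → ℝ} (hγ : ∀ i, 0 ≤ γ i) (x : EuclideanSpace ℝ ι) :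
    ‖diagScale (fun i => √(γ i)) x‖ = √(∑ i, γ i * x i ^ 2) := by
  simp [norm_eq, mul_pow, sq_sqrt (hγ _)]

end EuclideanSpace

theorem approxSMI_differentiable_general
    (n : ℕ) (c : ℝ)
    (γ : Fin n → ℝ) (hγ : ∀ i, 0 < γ i)
    (δ : EuclideanSpace ℝ (Fin n) → ℝ)
    (hδ : ∀ ξ, δ ξ = (π / c) * Real.sqrt (∑ i, γ i * ξ i ^ 2))
    (g : EuclideanSpace ℝ (Fin n) → ℝ)
    (hg : ∀ ξ, g ξ = if δ ξ ≤ π then 1 + Real.cos (δ ξ) else 0)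
    (S : Finset (EuclideanSpace ℝ (Fin n)))
    (I : EuclideanSpace ℝ (Fin n) → ℝ)
    (η β Iapprox : EuclideanSpace ℝ (Fin n) → ℝ)
    (hη : ∀ x, η x = ∑ v ∈ S, g (v - x))
    (hβ : ∀ x, β x = ∑ v ∈ S, I v * g (v - x))
    (hIapprox : ∀ x, Iapprox x = β x / η x) :
    ∀ x : EuclideanSpace ℝ (Fin n), 0 < η x → DifferentiableAt ℝ Iapprox x := by
  have hg_eq : g = fun ξ => cutoffCos (π / c * ‖EuclideanSpace.diagScale (fun i => √(γ i)) ξ‖) := by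
    funext ξ
    rw [hg, hδ, EuclideanSpace.norm_diagScale_sqrt fun i => (hγ i).le, cutoffCos]
  have hg_diff : Differentiable ℝ g := hg_eq ▸ differentiable_cutoffCos_comp_norm _ _
  have hη_diff : Differentiable ℝ η := funext hη ▸ by fun_prop
  have hβ_diff : Differentiable ℝ β := funext hβ ▸ by fun_prop
  intro x hx
  simp only [funext hIapprox, div_eq_mul_inv]
  exact (hβ_diff x).mul ((hη_diff x).inv hx.ne')

/-- The approximate mutual information `Iapprox(x) = β(x)/η(x)`, with
`η(x) = ∑_{v∈S} g(v − x)` and `β(x) = ∑_{v∈S} I_v · g(v − x)` built from the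
cutoff-cosine kernel `g`, is differentiable at every point of the set `{x : η(x) > 0}`. -/
theorem approxSMI_differentiable
    (n : ℕ) (c : ℝ) (hc : 0 < c)
    (γ : Fin n → ℝ) (hγ : ∀ i, 0 < γ i)
    (δ : EuclideanSpace ℝ (Fin n) → ℝ)
    (hδ : ∀ ξ, δ ξ = (π / c) * Real.sqrt (∑ i, γ i * ξ i ^ 2))
    (g : EuclideanSpace ℝ (Fin n) → ℝ)
    (hg : ∀ ξ, g ξ = if δ ξ ≤ π then 1 + Real.cos (δ ξ) else 0)
    (S : Finset (EuclideanSpace ℝ (Fin n)))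
    (I : EuclideanSpace ℝ (Fin n) → ℝ)
    (η β Iapprox : EuclideanSpace ℝ (Fin n) → ℝ)
    (hη : ∀ x, η x = ∑ v ∈ S, g (v - x))
    (hβ : ∀ x, β x = ∑ v ∈ S, I v * g (v - x))
    (hIapprox : ∀ x, Iapprox x = β x / η x) :
    ∀ x : EuclideanSpace ℝ (Fin n), 0 < η x → DifferentiableAt ℝ Iapprox x :=
  approxSMI_differentiable_general n c γ hγ δ hδ g hg S I η β Iapprox hη hβ hIapprox
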